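/- arXiv:2502.20086 — 3 statements merged into one kernel-verified Lean document; each statement's English description precedes it below -/
import Mathlib

section
/- Let C₀ ∈ ℝ^{n×n} be symmetric positive definite, J ∈ ℝ^{q×n}, σ > 0, and set C₁ = (C₀^{-1} + σ^{-2} Jᵀ J)^{-1}. Let λ₁, …, λ_n be the eigenvalues of the symmetric positive semidefinite matrix H = σ^{-2} C₀^{1/2} Jᵀ J C₀^{1/2}. Then tr(C₀^{-1} C₁) − n + log(det C₀ / det C₁) = Σ_{j=1}^{n} ( log(1 + λ_j) − λ_j / (1 + λ_j) ). Moreover, the nonzero eigenvalues of H coincide (with multiplicity) with the nonzero eigenvalues of σ^{-2} J C₀ Jᵀ. -/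
/-!
Write `S = C₀^{1/2}`. Then `C₀⁻¹ + σ⁻² JᵀJ = S⁻¹ (1 + H) S⁻¹`, so `C₁ = S (1 + H)⁻¹ S`, which gives
`tr (C₀⁻¹ C₁) = tr (1 + H)⁻¹` and `det C₀ / det C₁ = det (1 + H)`; both are sums resp. products
over the eigenvalues of `H` by the functional calculus. For the second claim, `H = MᴴM` and
`σ⁻² J C₀ Jᵀ = MMᴴ` for `M = σ⁻¹ J S`, and `Xⁿ χ_{MMᴴ} = X^q χ_{MᴴM}`.
-/

open Matrix

noncomputable def Matrix.PosSemidef.sqrt {n 𝕜 : Type*} [Fintype n] [DecidableEq n] [RCLike 𝕜] [PartialOrder 𝕜]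
    {A : Matrix n n 𝕜} (hA : A.PosSemidef) : Matrix n n 𝕜 :=
  hA.1.eigenvectorUnitary.1 * diagonal ((↑) ∘ (√·) ∘ hA.1.eigenvalues) *
  (star hA.1.eigenvectorUnitary : Matrix n n 𝕜)

open scoped ComplexOrder

open Polynomial in
theorem Polynomial.filter_ne_zero_roots_X_pow_mul {R : Type*} [CommRing R] [IsDomain R]
    [DecidableEq R] (k : ℕ) {p : R[X]} (hp : p ≠ 0) :
    (X ^ k * p).roots.filter (· ≠ 0) = p.roots.filter (· ≠ 0) := by
  rw [roots_mul (mul_ne_zero (pow_ne_zero k X_ne_zero) hp), roots_X_pow, Multiset.filter_add,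
    Multiset.nsmul_singleton, Multiset.filter_eq_nil.mpr fun _ hx => not_not.mpr
      (Multiset.eq_of_mem_replicate hx), zero_add]

namespace Matrix

section FunctionalCalculus

variable {n 𝕜 : Type*} [Fintype n] [DecidableEq n] [RCLike 𝕜] {A : Matrix n n 𝕜}

theorem PosSemidef.sqrt_eq_cfc (hA : A.PosSemidef) : hA.sqrt = cfc Real.sqrt A := by
  rw [hA.1.cfc_eq]
  rfl

theorem PosSemidef.isHermitian_sqrt (hA : A.PosSemidef) : hA.sqrt.IsHermitian :=
  hA.sqrt_eq_cfc ▸ cfc_predicate _ A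

theorem PosSemidef.sqrt_mul_sqrt (hA : A.PosSemidef) : hA.sqrt * hA.sqrt = A := by
  have hA' : IsSelfAdjoint A := hA.1
  rw [hA.sqrt_eq_cfc, ← cfc_mul Real.sqrt Real.sqrt A]
  conv_rhs => rw [← cfc_id' ℝ A]
  refine cfc_congr fun x hx => ?_
  rw [hA.1.spectrum_real_eq_range_eigenvalues] at hx
  obtain ⟨i, rfl⟩ := hx
  exact Real.mul_self_sqrt (hA.eigenvalues_nonneg i)

theorem IsHermitian.trace_cfc (hA : A.IsHermitian) (f : ℝ → ℝ) :
    (cfc f A).trace = ∑ i, (f (hA.eigenvalues i) : 𝕜) := by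
  rw [hA.cfc_eq, IsHermitian.cfc, Unitary.conjStarAlgAut_apply, trace_mul_cycle,
    Unitary.coe_star_mul_self, one_mul, trace_diagonal]
  rfl

theorem IsHermitian.det_cfc (hA : A.IsHermitian) (f : ℝ → ℝ) :
    (cfc f A).det = ∏ i, (f (hA.eigenvalues i) : 𝕜) := by
  rw [hA.cfc_eq, IsHermitian.cfc, Unitary.conjStarAlgAut_apply, det_mul_comm, ← Matrix.mul_assoc,
    Unitary.coe_star_mul_self, one_mul, det_diagonal]
  rfl

theorem IsHermitian.one_add_eq_cfc (hA : A.IsHermitian) :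
    1 + A = cfc (fun x : ℝ => 1 + x) A := by
  rw [cfc_const_add (1 : ℝ) (fun x => x) A, cfc_id' ℝ A, map_one]

theorem IsHermitian.inv_one_add_eq_cfc (hA : A.IsHermitian)
    (h : ∀ i, 1 + hA.eigenvalues i ≠ 0) :
    (1 + A)⁻¹ = cfc (fun x : ℝ => (1 + x)⁻¹) A := by
  rw [cfc_inv (fun x : ℝ => 1 + x) A, ← hA.one_add_eq_cfc, nonsing_inv_eq_ringInverse]
  rintro x hx
  rw [hA.spectrum_real_eq_range_eigenvalues] at hx
  obtain ⟨i, rfl⟩ := hx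
  exact h i

theorem IsHermitian.trace_inv_one_add_sub_card_add_log_det {H : Matrix n n ℝ}
    (hH : H.IsHermitian) (h : ∀ i, 1 + hH.eigenvalues i ≠ 0) :
    ((1 + H)⁻¹).trace - Fintype.card n + Real.log (1 + H).det
      = ∑ i, (Real.log (1 + hH.eigenvalues i) - hH.eigenvalues i / (1 + hH.eigenvalues i)) := by
  rw [hH.inv_one_add_eq_cfc h, hH.trace_cfc, hH.one_add_eq_cfc, hH.det_cfc]
  simp only [RCLike.ofReal_real_eq_id, id_eq]
  rw [Real.log_prod fun i _ => h i, Fintype.card_eq_sum_ones, Nat.cast_sum, Nat.cast_one,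
    ← Finset.sum_sub_distrib, ← Finset.sum_add_distrib]
  refine Finset.sum_congr rfl fun i _ => ?_
  field_simp [h i]
  ring

end FunctionalCalculus

section NonzeroEigenvalues

variable {m n 𝕜 : Type*} [Fintype m] [Fintype n] [DecidableEq m] [DecidableEq n] [RCLike 𝕜]

theorem IsHermitian.filter_ne_zero_eigenvalues_eq {A : Matrix m m 𝕜} {B : Matrix n n 𝕜}
    (hA : A.IsHermitian) (hB : B.IsHermitian)
    (h : A.charpoly.roots.filter (· ≠ 0) = B.charpoly.roots.filter (· ≠ 0)) :
    (Finset.univ.val.map hA.eigenvalues).filter (· ≠ 0)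
      = (Finset.univ.val.map hB.eigenvalues).filter (· ≠ 0) := by
  have filter_map_ofReal (s : Multiset ℝ) :
      (s.map RCLike.ofReal).filter (· ≠ 0) = (s.filter (· ≠ 0)).map (RCLike.ofReal : ℝ → 𝕜) := by
    simp [Multiset.filter_map]
  rw [hA.roots_charpoly_eq_eigenvalues, hB.roots_charpoly_eq_eigenvalues, ← Multiset.map_map,
    ← Multiset.map_map, filter_map_ofReal, filter_map_ofReal] at h
  exact Multiset.map_injective RCLike.ofReal_injective h

theorem filter_ne_zero_eigenvalues_mul_comm {A : Matrix m n 𝕜} {B : Matrix n m 𝕜}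
    (hAB : (A * B).IsHermitian) (hBA : (B * A).IsHermitian) :
    (Finset.univ.val.map hAB.eigenvalues).filter (· ≠ 0)
      = (Finset.univ.val.map hBA.eigenvalues).filter (· ≠ 0) := by
  refine hAB.filter_ne_zero_eigenvalues_eq hBA ?_
  rw [← Polynomial.filter_ne_zero_roots_X_pow_mul (Fintype.card n) (A * B).charpoly_monic.ne_zero,
    ← Polynomial.filter_ne_zero_roots_X_pow_mul (Fintype.card m) (B * A).charpoly_monic.ne_zero,
    charpoly_mul_comm']

end NonzeroEigenvalues

section Congruence

variable {n K : Type*} [Fintype n] [DecidableEq n] [Field K] {S : Matrix n n K}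

theorem inv_mul_self_add_eq_conj (hS : IsUnit S.det) (A : Matrix n n K) :
    (S * S)⁻¹ + A = S⁻¹ * (1 + S * A * S) * S⁻¹ := by
  rw [Matrix.mul_inv_rev, Matrix.mul_add, Matrix.add_mul, Matrix.mul_one, ← Matrix.mul_assoc,
    ← Matrix.mul_assoc, nonsing_inv_mul S hS, Matrix.one_mul, Matrix.mul_assoc,
    mul_nonsing_inv S hS, Matrix.mul_one]

theorem inv_inv_mul_mul_inv (hS : IsUnit S.det) (F : Matrix n n K) :
    (S⁻¹ * F * S⁻¹)⁻¹ = S * F⁻¹ * S := by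
  rw [Matrix.mul_inv_rev, Matrix.mul_inv_rev, nonsing_inv_nonsing_inv S hS, Matrix.mul_assoc]

theorem trace_inv_mul_self_mul_conj (hS : IsUnit S.det) (F : Matrix n n K) :
    ((S * S)⁻¹ * (S * F * S)).trace = F.trace := by
  rw [Matrix.mul_inv_rev, Matrix.mul_assoc, Matrix.mul_assoc, nonsing_inv_mul_cancel_left _ _ hS,
    trace_mul_comm, mul_nonsing_inv_cancel_right _ _ hS]

theorem det_mul_inv_mul (S F : Matrix n n K) : (S * F⁻¹ * S).det = (S * S).det / F.det := by
  rw [det_mul, det_mul, det_mul, det_nonsing_inv, Ring.inverse_eq_inv, div_eq_mul_inv]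
  ring

end Congruence

end Matrix

theorem gaussian_kl_trace_logdet_identity_and_eigenvalue_correspondence_general
    {n q : ℕ} (C0 : Matrix (Fin n) (Fin n) ℝ) (hC0 : C0.PosDef)
    (J : Matrix (Fin q) (Fin n) ℝ) (σ : ℝ)
    (C1 : Matrix (Fin n) (Fin n) ℝ)
    (hC1 : C1 = (C0⁻¹ + (σ ^ 2)⁻¹ • (Jᵀ * J))⁻¹)
    (H : Matrix (Fin n) (Fin n) ℝ)
    (hHdef : H = (σ ^ 2)⁻¹ •
      (hC0.posSemidef.sqrt * (Jᵀ * J) * hC0.posSemidef.sqrt))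
    (hHherm : H.IsHermitian)
    (H' : Matrix (Fin q) (Fin q) ℝ)
    (hH'def : H' = (σ ^ 2)⁻¹ • (J * C0 * Jᵀ))
    (hH'herm : H'.IsHermitian) :
    ((C0⁻¹ * C1).trace - (n : ℝ) + Real.log (C0.det / C1.det)
      = ∑ j : Fin n, (Real.log (1 + hHherm.eigenvalues j)
          - hHherm.eigenvalues j / (1 + hHherm.eigenvalues j))) ∧
    (Multiset.filter (fun x => x ≠ 0) (Finset.univ.val.map hHherm.eigenvalues)
      = Multiset.filter (fun x => x ≠ 0) (Finset.univ.val.map hH'herm.eigenvalues)) := by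
  set S := hC0.posSemidef.sqrt
  have hSS : S * S = C0 := hC0.posSemidef.sqrt_mul_sqrt
  have hdetC0 : C0.det ≠ 0 := hC0.det_pos.ne'
  have hS : IsUnit S.det := by
    rwa [isUnit_iff_ne_zero, ← pow_ne_zero_iff two_ne_zero, sq, ← det_mul, hSS]
  set M := σ⁻¹ • (J * S) with hM
  have hMH : Mᴴ = σ⁻¹ • (S * Jᵀ) := by
    rw [conjTranspose_smul, conjTranspose_mul, hC0.posSemidef.isHermitian_sqrt.eq,
      conjTranspose_eq_transpose_of_trivial, star_trivial]
  have hHM : H = Mᴴ * M := by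
    rw [hHdef, hMH, hM, Matrix.smul_mul, Matrix.mul_smul, smul_smul, ← mul_inv, ← sq]
    simp only [Matrix.mul_assoc]
  have hH'M : H' = M * Mᴴ := by
    rw [hH'def, hMH, hM, Matrix.smul_mul, Matrix.mul_smul, smul_smul, ← mul_inv, ← sq, ← hSS]
    simp only [Matrix.mul_assoc]
  have hC1' : C1 = S * (1 + H)⁻¹ * S := by
    rw [hC1, ← hSS, inv_mul_self_add_eq_conj hS, inv_inv_mul_mul_inv hS, hHdef,
      Matrix.mul_smul, Matrix.smul_mul]
  have hlam (i : Fin n) : 1 + hHherm.eigenvalues i ≠ 0 := by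
    have hHpsd : H.PosSemidef := hHM ▸ posSemidef_conjTranspose_mul_self M
    linarith [hHpsd.eigenvalues_nonneg i]
  refine ⟨?_, ?_⟩
  · rw [hC1', ← hSS, trace_inv_mul_self_mul_conj hS, det_mul_inv_mul,
      div_div_cancel₀ (hSS ▸ hdetC0),
      ← hHherm.trace_inv_one_add_sub_card_add_log_det hlam, Fintype.card_fin]
  · subst hHM hH'M
    exact filter_ne_zero_eigenvalues_mul_comm hHherm hH'herm

/-- **Gaussian KL-divergence identity and eigenvalue correspondence.**
For `C₁ = (C₀⁻¹ + σ⁻² Jᵀ J)⁻¹` and `H = σ⁻² C₀^{1/2} Jᵀ J C₀^{1/2}` with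
eigenvalues `λ₁, …, λ_n`, one has
`tr(C₀⁻¹ C₁) − n + log(det C₀ / det C₁) = Σ_j (log(1 + λ_j) − λ_j/(1 + λ_j))`,
and the nonzero eigenvalues of `H` coincide (with multiplicity) with the
nonzero eigenvalues of `σ⁻² J C₀ Jᵀ`. -/
theorem gaussian_kl_trace_logdet_identity_and_eigenvalue_correspondence
    {n q : ℕ} (C0 : Matrix (Fin n) (Fin n) ℝ) (hC0 : C0.PosDef)
    (J : Matrix (Fin q) (Fin n) ℝ) (σ : ℝ) (hσ : 0 < σ)
    (C1 : Matrix (Fin n) (Fin n) ℝ)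
    (hC1 : C1 = (C0⁻¹ + (σ ^ 2)⁻¹ • (Jᵀ * J))⁻¹)
    (H : Matrix (Fin n) (Fin n) ℝ)
    (hHdef : H = (σ ^ 2)⁻¹ •
      (hC0.posSemidef.sqrt * (Jᵀ * J) * hC0.posSemidef.sqrt))
    (hHherm : H.IsHermitian)
    (H' : Matrix (Fin q) (Fin q) ℝ)
    (hH'def : H' = (σ ^ 2)⁻¹ • (J * C0 * Jᵀ))
    (hH'herm : H'.IsHermitian) :
    ((C0⁻¹ * C1).trace - (n : ℝ) + Real.log (C0.det / C1.det)
      = ∑ j : Fin n, (Real.log (1 + hHherm.eigenvalues j)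
          - hHherm.eigenvalues j / (1 + hHherm.eigenvalues j))) ∧
    (Multiset.filter (fun x => x ≠ 0) (Finset.univ.val.map hHherm.eigenvalues)
      = Multiset.filter (fun x => x ≠ 0) (Finset.univ.val.map hH'herm.eigenvalues)) :=
  gaussian_kl_trace_logdet_identity_and_eigenvalue_correspondence_general C0 hC0 J σ C1 hC1 H hHdef
    hHherm H' hH'def hH'herm
end

section
/- Let ρ_y be a probability density on ℝ^d and ρ_m a probability density on ℝ^n. Let S : ℝ^{d+n} → ℝ^{d+n} be a C¹ diffeomorphism of lower-triangular form S(u_y, u_m) = (A(u_y), B(u_y, u_m)), where A : ℝ^d → ℝ^d is a C¹ diffeomorphism. Suppose S pushes forward the product measure with density ρ_y(u_y) ρ_m(u_m) to the measure with joint density π(y, m) on ℝ^d × ℝ^n. Then: (i) A pushes forward the measure with density ρ_y to the measure with the marginal density π_Y(y) = ∫_{ℝ^n} π(y, m) dm; and (ii) for Lebesgue-almost every y ∈ ℝ^d with π_Y(y) > 0, the map u_m ↦ B(A^{-1}(y), u_m) pushes forward the measure with density ρ_m to the measure with the conditional density m ↦ π(y, m)/π_Y(y). -/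
/-!
Factor `S` as `(u_y, u_m) ↦ (u_y, B(u_y, u_m))` followed by `A × id`. Then `S_♯(ρ_y ⊗ ρ_m)` is the
composition-product of the marginal `A_♯ρ_y` with the kernel `y ↦ B(A⁻¹ y, ·)_♯ρ_m`. On the other
hand a joint density `π` is the composition-product of its marginal `π_Y` with the kernel of
conditional densities `π(y, ·) / π_Y(y)`. Comparing first marginals gives (i), and uniqueness of
disintegrations into finite kernels on a countably generated space gives (ii).
-/

open MeasureTheory ProbabilityTheory Function
open scoped ENNReal

variable {α β γ δ : Type*} [MeasurableSpace α] [MeasurableSpace β] [MeasurableSpace γ]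
  [MeasurableSpace δ]

theorem MeasureTheory.isProbabilityMeasure_withDensity_ofReal {μ : Measure α} {f : α → ℝ}
    (hf : 0 ≤ᵐ[μ] f) (hf_one : ∫ x, f x ∂μ = 1) :
    IsProbabilityMeasure (μ.withDensity fun x => ENNReal.ofReal (f x)) := by
  have hint : Integrable f μ := by
    by_contra h
    rw [integral_undef h] at hf_one
    exact zero_ne_one hf_one
  constructor
  rw [withDensity_apply _ MeasurableSet.univ, Measure.restrict_univ,
    ← ofReal_integral_eq_lintegral_ofReal hint hf, hf_one, ENNReal.ofReal_one]

theorem MeasureTheory.ofReal_integral_eq_lintegral_ofReal_of_ne_top {μ : Measure α} {f : α → ℝ}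
    (hf : 0 ≤ᵐ[μ] f) (hfm : AEStronglyMeasurable f μ) (hfin : ∫⁻ x, ENNReal.ofReal (f x) ∂μ ≠ ∞) :
    ENNReal.ofReal (∫ x, f x ∂μ) = ∫⁻ x, ENNReal.ofReal (f x) ∂μ := by
  rw [integral_eq_lintegral_of_nonneg_ae hf hfm, ENNReal.ofReal_toReal hfin]

theorem MeasureTheory.ae_ne_top_of_isFiniteMeasure_withDensity {μ : Measure α} {g : α → ℝ≥0∞}
    (hg : AEMeasurable g μ) [IsFiniteMeasure (μ.withDensity g)] : ∀ᵐ x ∂μ, g x ≠ ∞ := by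
  refine (ae_lt_top' hg ?_).mono fun _ => ne_of_lt
  rw [← setLIntegral_univ, ← withDensity_apply _ .univ]
  exact measure_ne_top _ _

theorem MeasureTheory.Measure.fst_withDensity_prod {μ : Measure α} [SFinite μ] {ν : Measure β}
    [SFinite ν] {f : α × β → ℝ≥0∞} (hf : Measurable f) :
    ((μ.prod ν).withDensity f).fst = μ.withDensity fun x => ∫⁻ y, f (x, y) ∂ν := by
  ext s hs
  rw [Measure.fst_apply hs, ← Set.prod_univ, withDensity_apply _ (hs.prod .univ),
    ← Measure.prod_restrict, Measure.restrict_univ, lintegral_prod _ hf.aemeasurable,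
    withDensity_apply _ hs]

namespace ProbabilityTheory.Kernel

noncomputable def sectionPushforward (ρ : Measure γ) [SFinite ρ] (B : α → γ → δ)
    (hB : Measurable (uncurry B)) : Kernel α δ where
  toFun a := ρ.map (B a)
  measurable' := by
    refine Measure.measurable_of_measurable_coe _ fun t ht => ?_
    simp_rw [Measure.map_apply hB.of_uncurry_left ht]
    exact measurable_measure_prodMk_left (hB ht)

variable {ρ : Measure γ} {B : α → γ → δ} (hB : Measurable (uncurry B))

theorem sectionPushforward_apply [SFinite ρ] (a : α) :
    sectionPushforward ρ B hB a = ρ.map (B a) := rfl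

instance [IsFiniteMeasure ρ] : IsFiniteKernel (sectionPushforward ρ B hB) :=
  ⟨⟨ρ .univ, measure_lt_top ρ _, fun a => by
    rw [sectionPushforward_apply, Measure.map_apply hB.of_uncurry_left .univ, Set.preimage_univ]⟩⟩

instance [IsProbabilityMeasure ρ] : IsMarkovKernel (sectionPushforward ρ B hB) :=
  ⟨fun _ => Measure.isProbabilityMeasure_map hB.of_uncurry_left.aemeasurable⟩

end ProbabilityTheory.Kernel

theorem MeasureTheory.Measure.map_prod_triangular_eq_compProd {μ : Measure α} [SFinite μ]
    {ρ : Measure γ} [IsFiniteMeasure ρ] {A : α → β} {Ainv : β → α} (hA : Measurable A)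
    (hAinv : Measurable Ainv) (hAA : LeftInverse Ainv A) {B : α → γ → δ}
    (hB : Measurable (uncurry B)) :
    (μ.prod ρ).map (fun p => (A p.1, B p.1 p.2)) =
      μ.map A ⊗ₘ (Kernel.sectionPushforward ρ B hB).comap Ainv hAinv := by
  ext s hs
  have hT : Measurable fun p : α × γ => (A p.1, B p.1 p.2) :=
    (hA.comp measurable_fst).prodMk hB
  rw [Measure.map_apply hT hs, Measure.prod_apply (hT hs), Measure.compProd_apply hs,
    lintegral_map (Kernel.measurable_kernel_prodMk_left hs) hA]
  refine lintegral_congr fun u => ?_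
  rw [Kernel.comap_apply, hAA u, Kernel.sectionPushforward_apply,
    Measure.map_apply hB.of_uncurry_left (measurable_prodMk_left hs)]
  rfl

namespace ProbabilityTheory

/-- At points where the marginal `∫⁻ y', f (x, y') ∂ν` is `0` or `∞` the kernel has total mass `0`,
since `0 / 0 = ∞ / ∞ = 0` in `ℝ≥0∞`. -/
noncomputable def condDensityKernel (ν : Measure β) [SFinite ν] (f : α × β → ℝ≥0∞) :
    Kernel α β :=
  (Kernel.const α ν).withDensity fun x y => f (x, y) / ∫⁻ y', f (x, y') ∂ν

variable {ν : Measure β} [SFinite ν] {f : α × β → ℝ≥0∞}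

theorem measurable_condDensity (hf : Measurable f) :
    Measurable (uncurry fun x y => f (x, y) / ∫⁻ y', f (x, y') ∂ν) :=
  hf.div (hf.lintegral_prod_right'.comp measurable_fst)

theorem condDensityKernel_apply (hf : Measurable f) (x : α) :
    condDensityKernel ν f x = ν.withDensity fun y => f (x, y) / ∫⁻ y', f (x, y') ∂ν :=
  Kernel.withDensity_apply _ (measurable_condDensity hf) x

theorem isFiniteKernel_condDensityKernel (hf : Measurable f) :
    IsFiniteKernel (condDensityKernel ν f) := by
  refine ⟨⟨1, ENNReal.one_lt_top, fun x => ?_⟩⟩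
  simp_rw [condDensityKernel_apply hf, withDensity_apply _ MeasurableSet.univ,
    Measure.restrict_univ, div_eq_mul_inv]
  rw [lintegral_mul_const _ (by fun_prop)]
  exact ENNReal.mul_inv_le_one _

theorem withDensity_lintegral_compProd_condDensityKernel {μ : Measure α} [SFinite μ]
    (hf : Measurable f) (hfin : ∀ᵐ x ∂μ, ∫⁻ y, f (x, y) ∂ν ≠ ∞) :
    μ.withDensity (fun x => ∫⁻ y, f (x, y) ∂ν) ⊗ₘ condDensityKernel ν f =
      (μ.prod ν).withDensity f := by
  have := isFiniteKernel_condDensityKernel (ν := ν) hf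
  unfold condDensityKernel at this ⊢
  have hg : Measurable fun x => ∫⁻ y, f (x, y) ∂ν := hf.lintegral_prod_right'
  rw [Measure.compProd_withDensity (measurable_condDensity hf),
    Measure.compProd_const, prod_withDensity_left hg, ← withDensity_mul]
  · refine withDensity_congr_ae ((Measure.ae_prod_iff_ae_ae ?_).2 ?_)
    · exact measurableSet_eq_fun ((hg.comp measurable_fst).mul (measurable_condDensity hf)) hf
    filter_upwards [hfin] with x hx_top
    by_cases hx_zero : ∫⁻ y, f (x, y) ∂ν = 0
    · filter_upwards [(lintegral_eq_zero_iff (hf.comp measurable_prodMk_left)).1 hx_zero] with y hy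
      simp [hx_zero, show f (x, y) = 0 from hy]
    · exact ae_of_all _ fun y => ENNReal.mul_div_cancel hx_zero hx_top
  · fun_prop
  · exact measurable_condDensity hf

theorem ae_eq_condDensityKernel_of_compProd_eq
    [MeasurableSpace.CountableOrCountablyGenerated α β] {μ : Measure α} [SFinite μ]
    [IsFiniteMeasure (μ.withDensity fun x => ∫⁻ y, f (x, y) ∂ν)] {κ : Kernel α β}
    [IsFiniteKernel κ] (hf : Measurable f)
    (h : μ.withDensity (fun x => ∫⁻ y, f (x, y) ∂ν) ⊗ₘ κ = (μ.prod ν).withDensity f) :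
    ∀ᵐ x ∂μ, ∫⁻ y, f (x, y) ∂ν ≠ 0 → κ x = condDensityKernel ν f x := by
  have hg : Measurable fun x => ∫⁻ y, f (x, y) ∂ν := hf.lintegral_prod_right'
  have := isFiniteKernel_condDensityKernel (ν := ν) hf
  refine (ae_withDensity_iff hg).1 (Kernel.ae_eq_of_compProd_eq (h.trans ?_))
  exact (withDensity_lintegral_compProd_condDensityKernel hf
    (ae_ne_top_of_isFiniteMeasure_withDensity hg.aemeasurable)).symm

end ProbabilityTheory

theorem triangular_map_marginal_and_conditional_pushforward_general
    {d n : ℕ}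
    (ρy : (Fin d → ℝ) → ℝ) (hρynn : ∀ y, 0 ≤ ρy y) (hρydens : ∫ y, ρy y = 1)
    (ρm : (Fin n → ℝ) → ℝ) (hρmnn : ∀ m, 0 ≤ ρm m) (hρmdens : ∫ m, ρm m = 1)
    (A Ainv : (Fin d → ℝ) → (Fin d → ℝ))
    (hA : ContDiff ℝ 1 A) (hAinv : ContDiff ℝ 1 Ainv)
    (hAleft : Function.LeftInverse Ainv A)
    (B : (Fin d → ℝ) → (Fin n → ℝ) → (Fin n → ℝ))
    (S : (Fin d → ℝ) × (Fin n → ℝ) → (Fin d → ℝ) × (Fin n → ℝ))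
    (hSdef : ∀ p, S p = (A p.1, B p.1 p.2))
    (hS : ContDiff ℝ 1 S)
    (π : (Fin d → ℝ) → (Fin n → ℝ) → ℝ)
    (hπmeas : Measurable (Function.uncurry π)) (hπnn : ∀ y m, 0 ≤ π y m)
    (hpush : Measure.map S
        ((volume.withDensity (fun y => ENNReal.ofReal (ρy y))).prod
          (volume.withDensity (fun m => ENNReal.ofReal (ρm m))))
      = (volume.prod volume).withDensity
          (fun p => ENNReal.ofReal (π p.1 p.2)))
    (πY : (Fin d → ℝ) → ℝ) (hπY : ∀ y, πY y = ∫ m, π y m) :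
    (Measure.map A (volume.withDensity (fun y => ENNReal.ofReal (ρy y)))
      = volume.withDensity (fun y => ENNReal.ofReal (πY y))) ∧
    (∀ᵐ y : Fin d → ℝ, 0 < πY y →
      Measure.map (fun um => B (Ainv y) um)
          (volume.withDensity (fun m => ENNReal.ofReal (ρm m)))
        = volume.withDensity (fun m => ENNReal.ofReal (π y m / πY y))) := by
  set μy := volume.withDensity fun y => ENNReal.ofReal (ρy y)
  set μm := volume.withDensity fun m => ENNReal.ofReal (ρm m)
  have := isProbabilityMeasure_withDensity_ofReal (ae_of_all _ hρynn) hρydens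
  have := isProbabilityMeasure_withDensity_ofReal (ae_of_all _ hρmnn) hρmdens
  have hB : Measurable (uncurry B) := by
    convert measurable_snd.comp hS.continuous.measurable using 1
    exact funext fun p => congrArg Prod.snd (hSdef p).symm
  have hAinv_meas := hAinv.continuous.measurable
  set f := fun p : (Fin d → ℝ) × (Fin n → ℝ) => ENNReal.ofReal (π p.1 p.2)
  have hf : Measurable f := hπmeas.ennreal_ofReal
  set κ := (Kernel.sectionPushforward μm B hB).comap Ainv hAinv_meas
  have hjoint : μy.map A ⊗ₘ κ = (volume.prod volume).withDensity f := by
    rw [← Measure.map_prod_triangular_eq_compProd hA.continuous.measurable hAinv_meas hAleft,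
      ← hpush, funext hSdef]
  have hmarg : μy.map A = volume.withDensity fun y => ∫⁻ m, f (y, m) := by
    rw [← Measure.fst_withDensity_prod hf, ← hjoint, Measure.fst_compProd]
  have : IsFiniteMeasure (volume.withDensity fun y => ∫⁻ m, f (y, m)) := hmarg ▸ inferInstance
  have hπY_ae : ∀ᵐ y, ∫⁻ m, f (y, m) = ENNReal.ofReal (πY y) := by
    filter_upwards [ae_ne_top_of_isFiniteMeasure_withDensity
      (hf.lintegral_prod_right' (ν := volume)).aemeasurable] with y hy
    rw [hπY, ofReal_integral_eq_lintegral_ofReal_of_ne_top (ae_of_all _ (hπnn y))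
      hπmeas.of_uncurry_left.aestronglyMeasurable hy]
  refine ⟨hmarg.trans (withDensity_congr_ae hπY_ae), ?_⟩
  filter_upwards [ae_eq_condDensityKernel_of_compProd_eq hf (hmarg ▸ hjoint), hπY_ae]
    with y hκ hy hpos
  calc μm.map (B (Ainv y)) = κ y := rfl
    _ = condDensityKernel volume f y := hκ (hy ▸ (ENNReal.ofReal_pos.2 hpos).ne')
    _ = _ := by
      rw [condDensityKernel_apply hf, hy]
      simp_rw [f, ENNReal.ofReal_div_of_pos hpos]

/-- **Marginal and conditional pushforwards of a lower-triangular (Knothe–Rosenblatt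
type) C¹ diffeomorphism.** If `S(u_y, u_m) = (A(u_y), B(u_y, u_m))` pushes
`ρ_y ⊗ ρ_m` forward to the joint density `π`, then `A` pushes `ρ_y` forward to the
marginal `π_Y`, and for a.e. `y` with `π_Y(y) > 0`, `u_m ↦ B(A⁻¹(y), u_m)` pushes
`ρ_m` forward to the conditional density `m ↦ π(y,m)/π_Y(y)`. -/
theorem triangular_map_marginal_and_conditional_pushforward
    {d n : ℕ}
    (ρy : (Fin d → ℝ) → ℝ) (hρynn : ∀ y, 0 ≤ ρy y) (hρydens : ∫ y, ρy y = 1)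
    (ρm : (Fin n → ℝ) → ℝ) (hρmnn : ∀ m, 0 ≤ ρm m) (hρmdens : ∫ m, ρm m = 1)
    (A Ainv : (Fin d → ℝ) → (Fin d → ℝ))
    (hA : ContDiff ℝ 1 A) (hAinv : ContDiff ℝ 1 Ainv)
    (hAleft : Function.LeftInverse Ainv A) (hAright : Function.RightInverse Ainv A)
    (B : (Fin d → ℝ) → (Fin n → ℝ) → (Fin n → ℝ))
    (S Sinv : (Fin d → ℝ) × (Fin n → ℝ) → (Fin d → ℝ) × (Fin n → ℝ))
    (hSdef : ∀ p, S p = (A p.1, B p.1 p.2))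
    (hS : ContDiff ℝ 1 S) (hSinv : ContDiff ℝ 1 Sinv)
    (hSleft : Function.LeftInverse Sinv S) (hSright : Function.RightInverse Sinv S)
    (π : (Fin d → ℝ) → (Fin n → ℝ) → ℝ)
    (hπmeas : Measurable (Function.uncurry π)) (hπnn : ∀ y m, 0 ≤ π y m)
    (hpush : Measure.map S
        ((volume.withDensity (fun y => ENNReal.ofReal (ρy y))).prod
          (volume.withDensity (fun m => ENNReal.ofReal (ρm m))))
      = (volume.prod volume).withDensity
          (fun p => ENNReal.ofReal (π p.1 p.2)))
    (πY : (Fin d → ℝ) → ℝ) (hπY : ∀ y, πY y = ∫ m, π y m) :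
    (Measure.map A (volume.withDensity (fun y => ENNReal.ofReal (ρy y)))
      = volume.withDensity (fun y => ENNReal.ofReal (πY y))) ∧
    (∀ᵐ y : Fin d → ℝ, 0 < πY y →
      Measure.map (fun um => B (Ainv y) um)
          (volume.withDensity (fun m => ENNReal.ofReal (ρm m)))
        = volume.withDensity (fun m => ENNReal.ofReal (π y m / πY y))) :=
  triangular_map_marginal_and_conditional_pushforward_general ρy hρynn hρydens ρm hρmnn hρmdens A
    Ainv hA hAinv hAleft B S hSdef hS π hπmeas hπnn hpush πY hπY
end

section
/- Let U ∈ ℝ^{n×r} have orthonormal columns (UᵀU = I_r), and let T̃ : ℝ^r → ℝ^r be a C¹ diffeomorphism that pushes forward the standard Gaussian measure on ℝ^r to the measure with probability density g on ℝ^r. Define T : ℝ^n → ℝ^n by T(v) = U T̃(Uᵀ v) + (I_n − U Uᵀ) v. Then T is a bijection and pushes forward the standard Gaussian measure on ℝ^n to the measure with density m ↦ g(Uᵀ m) · (2π)^{-(n−r)/2} exp(−½ ‖(I_n − U Uᵀ) m‖²). -/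
/-!
Complete the columns of `U` to an orthonormal basis `u₁, …, u_r, w₁, …, w_{n-r}` of `ℝⁿ`. The
coordinate map `P v = (Uᵀ v, (⟪wⱼ, v⟫)ⱼ)` preserves Lebesgue measure and, by Pythagoras, turns
`φ_n` into `φ_r ⊗ φ_{n-r}`. Since `T = P⁻¹ ∘ (T̃ × id) ∘ P`, the map `T` pushes `φ_n` forward to
`(g ⊗ φ_{n-r}) ∘ P`, and the second coordinate of `P m` has the norm of `(I − UUᵀ) m`.
-/

open MeasureTheory Matrix

/-- The standard Gaussian density on `ℝ^k`: `φ_k(m) = (2π)^{-k/2} exp(-‖m‖²/2)`. -/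
noncomputable def stdGauss (k : ℕ) (m : Fin k → ℝ) : ℝ :=
  (2 * Real.pi) ^ (-(k : ℝ) / 2) * Real.exp (-(∑ i, m i ^ 2) / 2)

open scoped ENNReal

theorem MeasureTheory.MeasurePreserving.map_withDensity_comp {α β : Type*}
    [MeasurableSpace α] [MeasurableSpace β] {μ : Measure α} {ν : Measure β} {e : α ≃ᵐ β}
    (he : MeasurePreserving e μ ν) (f : β → ℝ≥0∞) :
    (μ.withDensity (f ∘ e)).map e = ν.withDensity f := by
  ext s hs
  rw [Measure.map_apply e.measurable hs, withDensity_apply _ hs,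
    withDensity_apply _ (e.measurable hs), ← he.map_eq, Measure.restrict_map e.measurable hs,
    lintegral_map_equiv]
  rfl

theorem MeasureTheory.MeasurePreserving.map_symm_withDensity {α β : Type*}
    [MeasurableSpace α] [MeasurableSpace β] {μ : Measure α} {ν : Measure β} {e : α ≃ᵐ β}
    (he : MeasurePreserving e μ ν) (f : β → ℝ≥0∞) :
    (ν.withDensity f).map e.symm = μ.withDensity (f ∘ e) := by
  rw [← he.map_withDensity_comp, MeasurableEquiv.map_symm_map]

theorem MeasureTheory.Measure.map_prodMap_withDensity_mul {β β' γ : Type*}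
    [MeasurableSpace β] [MeasurableSpace β'] [MeasurableSpace γ]
    {μ : Measure β} {μ' : Measure β'} (ν : Measure γ) [SFinite μ] [SFinite μ'] [SFinite ν]
    {S : β → β'} (hS : Measurable S) {f : β → ℝ≥0∞} {g : β' → ℝ≥0∞} {h : γ → ℝ≥0∞}
    (hf : AEMeasurable f μ) (hg : AEMeasurable g μ') (hh : AEMeasurable h ν)
    (hpush : (μ.withDensity f).map S = μ'.withDensity g) :
    ((μ.prod ν).withDensity fun p => f p.1 * h p.2).map (Prod.map S id)
      = (μ'.prod ν).withDensity fun p => g p.1 * h p.2 := by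
  rw [← prod_withDensity₀ hf hh, ← Measure.map_prod_map _ _ hS measurable_id, hpush,
    Measure.map_id, prod_withDensity₀ hg hh]

theorem MeasureTheory.MeasurePreserving.map_conj_prodMap_withDensity {α β γ : Type*}
    [MeasurableSpace α] [MeasurableSpace β] [MeasurableSpace γ] {μ : Measure α}
    {ν : Measure β} {ρ : Measure γ} [SFinite ν] [SFinite ρ] {P : α ≃ᵐ β × γ}
    (hP : MeasurePreserving P μ (ν.prod ρ)) {S : β → β} (hS : Measurable S)
    {f g : β → ℝ≥0∞} {h : γ → ℝ≥0∞} (hf : AEMeasurable f ν) (hg : AEMeasurable g ν)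
    (hh : AEMeasurable h ρ) (hpush : (ν.withDensity f).map S = ν.withDensity g) :
    (μ.withDensity ((fun p => f p.1 * h p.2) ∘ P)).map (P.symm ∘ Prod.map S id ∘ P)
      = μ.withDensity ((fun p => g p.1 * h p.2) ∘ P) := by
  have hSid : Measurable (Prod.map S (id : γ → γ)) := hS.prodMap measurable_id
  rw [← Measure.map_map P.symm.measurable (hSid.comp P.measurable),
    ← Measure.map_map hSid P.measurable, hP.map_withDensity_comp,
    Measure.map_prodMap_withDensity_mul ρ hS hf hg hh hpush, hP.map_symm_withDensity]

theorem measurable_stdGauss (k : ℕ) : Measurable (stdGauss k) := by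
  unfold stdGauss
  fun_prop

theorem stdGauss_nonneg (k : ℕ) (x : Fin k → ℝ) : 0 ≤ stdGauss k x := by
  unfold stdGauss
  positivity

theorem stdGauss_mul_stdGauss {k l n : ℕ} (hn : k + l = n) {x : Fin n → ℝ} {y : Fin k → ℝ}
    {z : Fin l → ℝ} (hsq : ∑ i, y i ^ 2 + ∑ j, z j ^ 2 = ∑ i, x i ^ 2) :
    stdGauss k y * stdGauss l z = stdGauss n x := by
  subst hn
  unfold stdGauss
  rw [← hsq, Nat.cast_add, show -((k : ℝ) + l) / 2 = -k / 2 + -l / 2 by ring,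
    Real.rpow_add (by positivity), neg_add, add_div, Real.exp_add]
  ring

section Extension

variable {m ι : Type*} [Fintype m] [Fintype ι] [DecidableEq ι] {U : Matrix m ι ℝ}

omit [Fintype ι] in
theorem orthonormal_toLp_transpose (hU : Uᵀ * U = 1) :
    Orthonormal ℝ fun j => WithLp.toLp 2 (Uᵀ j) := by
  rw [orthonormal_iff_ite]
  intro i j
  simpa [Matrix.mul_apply, Matrix.one_apply, PiLp.inner_apply, mul_comm] using
    congrFun (congrFun hU i) j

theorem card_le_of_transpose_mul_self_eq_one (hU : Uᵀ * U = 1) :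
    Fintype.card ι ≤ Fintype.card m := by
  simpa using (orthonormal_toLp_transpose hU).linearIndependent.fintype_card_le_finrank

theorem exists_orthonormalBasis_sum_extension (hU : Uᵀ * U = 1)
    (κ : Type*) [Fintype κ] (hκ : Fintype.card ι + Fintype.card κ = Fintype.card m) :
    ∃ b : OrthonormalBasis (ι ⊕ κ) ℝ (EuclideanSpace ℝ m),
      ∀ j, b (.inl j) = WithLp.toLp 2 (Uᵀ j) := by
  have hv : Orthonormal ℝ ((Set.range (Sum.inl : ι → ι ⊕ κ)).domRestrict
      (Sum.elim (fun j => WithLp.toLp 2 (Uᵀ j)) 0)) := by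
    convert (orthonormal_toLp_transpose hU).comp _
      (Equiv.ofInjective _ Sum.inl_injective).symm.injective
    funext ⟨_, j, rfl⟩
    simp
  obtain ⟨b, hb⟩ := hv.exists_orthonormalBasis_extension_of_card_eq
    (by rw [finrank_euclideanSpace, Fintype.card_sum, hκ])
  exact ⟨b, fun j => hb _ ⟨j, rfl⟩⟩

end Extension

namespace OrthonormalBasis

variable {m ι κ : Type*} [Fintype m] [Fintype ι] [Fintype κ]
  (b : OrthonormalBasis (ι ⊕ κ) ℝ (EuclideanSpace ℝ m))

noncomputable def sumCoords : (m → ℝ) ≃ᵐ (ι → ℝ) × (κ → ℝ) :=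
  (MeasurableEquiv.toLp 2 (m → ℝ)).trans <| b.measurableEquiv.trans <|
    (MeasurableEquiv.toLp 2 _).symm.trans (MeasurableEquiv.sumPiEquivProdPi _)

theorem sumCoords_apply (x : m → ℝ) :
    b.sumCoords x = (fun i => b.repr (WithLp.toLp 2 x) (.inl i),
      fun j => b.repr (WithLp.toLp 2 x) (.inr j)) := rfl

theorem measurePreserving_sumCoords : MeasurePreserving b.sumCoords volume volume :=
  (PiLp.volume_preserving_toLp m).trans <| b.measurePreserving_measurableEquiv.trans <|
    (PiLp.volume_preserving_ofLp _).trans (volume_measurePreserving_sumPiEquivProdPi _)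

theorem sumCoords_add (x y : m → ℝ) : b.sumCoords (x + y) = b.sumCoords x + b.sumCoords y := by
  simp only [sumCoords_apply, WithLp.toLp_add, map_add, PiLp.add_apply]
  rfl

theorem sumCoords_sub (x y : m → ℝ) : b.sumCoords (x - y) = b.sumCoords x - b.sumCoords y := by
  simp only [sumCoords_apply, WithLp.toLp_sub, map_sub, PiLp.sub_apply]
  rfl

theorem sum_sq_sumCoords (x : m → ℝ) :
    ∑ i, (b.sumCoords x).1 i ^ 2 + ∑ j, (b.sumCoords x).2 j ^ 2 = ∑ k, x k ^ 2 := by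
  have h := congrArg (· ^ 2) (b.repr.norm_map (WithLp.toLp 2 x))
  simp only [EuclideanSpace.norm_sq_eq, Real.norm_eq_abs, sq_abs, Fintype.sum_sum_type] at h
  simpa [sumCoords_apply] using h

variable {U : Matrix m ι ℝ} {b} (hb : ∀ j, b (.inl j) = WithLp.toLp 2 (Uᵀ j))
include hb

theorem sumCoords_fst (x : m → ℝ) : (b.sumCoords x).1 = Uᵀ *ᵥ x := by
  ext j
  simp [sumCoords_apply, b.repr_apply_apply, hb, PiLp.inner_apply, Matrix.mulVec, dotProduct,
    mul_comm]

theorem sumCoords_mulVec (y : ι → ℝ) : b.sumCoords (U *ᵥ y) = (y, 0) := by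
  have hy : WithLp.toLp 2 (U *ᵥ y) = b.repr.symm (WithLp.toLp 2 (Sum.elim y 0)) := by
    rw [← b.sum_repr_symm]
    ext k
    simp [Fintype.sum_sum_type, hb, Matrix.mulVec, dotProduct, mul_comm]
  simp only [sumCoords_apply, hy, LinearIsometryEquiv.apply_symm_apply]
  rfl

theorem sumCoords_mulVec_add_sub (x : m → ℝ) (y : ι → ℝ) :
    b.sumCoords (U *ᵥ y + (x - U *ᵥ Uᵀ *ᵥ x)) = (y, (b.sumCoords x).2) := by
  rw [sumCoords_add, sumCoords_sub, sumCoords_mulVec hb, sumCoords_mulVec hb]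
  ext <;> simp [sumCoords_fst hb]

theorem sum_sq_sub_mulVec_mulVec (x : m → ℝ) :
    ∑ i, (x i - (U *ᵥ Uᵀ *ᵥ x) i) ^ 2 = ∑ j, (b.sumCoords x).2 j ^ 2 := by
  have h := b.sum_sq_sumCoords (U *ᵥ 0 + (x - U *ᵥ Uᵀ *ᵥ x))
  rw [sumCoords_mulVec_add_sub hb, mulVec_zero, zero_add] at h
  simpa using h.symm

end OrthonormalBasis

theorem OrthonormalBasis.stdGauss_eq_mul_sumCoords {n k l : ℕ}
    (b : OrthonormalBasis (Fin k ⊕ Fin l) ℝ (EuclideanSpace ℝ (Fin n))) (x : Fin n → ℝ) :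
    stdGauss n x = stdGauss k (b.sumCoords x).1 * stdGauss l (b.sumCoords x).2 := by
  have hn : k + l = n := by simpa using (Module.finrank_eq_card_basis b.toBasis).symm
  exact (stdGauss_mul_stdGauss hn (b.sum_sq_sumCoords x)).symm

theorem subspace_embedded_map_pushforward_general
    {n r : ℕ} (U : Matrix (Fin n) (Fin r) ℝ) (hU : Uᵀ * U = 1)
    (Tt Ttinv : (Fin r → ℝ) → (Fin r → ℝ))
    (hTt : ContDiff ℝ 1 Tt)
    (hTtleft : Function.LeftInverse Ttinv Tt)
    (hTtright : Function.RightInverse Ttinv Tt)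
    (g : (Fin r → ℝ) → ℝ) (hgdens : ∫ w, g w = 1)
    (hpushTt : Measure.map Tt
        (volume.withDensity (fun v => ENNReal.ofReal (stdGauss r v)))
      = volume.withDensity (fun w => ENNReal.ofReal (g w)))
    (T : (Fin n → ℝ) → (Fin n → ℝ))
    (hTdef : ∀ v, T v = U.mulVec (Tt (Uᵀ.mulVec v)) + (v - U.mulVec (Uᵀ.mulVec v))) :
    Function.Bijective T ∧
    Measure.map T (volume.withDensity (fun v => ENNReal.ofReal (stdGauss n v)))
      = volume.withDensity (fun m => ENNReal.ofReal
          (g (Uᵀ.mulVec m) * ((2 * Real.pi) ^ (-((n : ℝ) - (r : ℝ)) / 2) *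
            Real.exp (-(∑ i, (m i - U.mulVec (Uᵀ.mulVec m) i) ^ 2) / 2)))) := by
  have hrn : r ≤ n := by simpa using card_le_of_transpose_mul_self_eq_one hU
  obtain ⟨b, hb⟩ := exists_orthonormalBasis_sum_extension hU (Fin (n - r)) (by simp; omega)
  set P := b.sumCoords
  have hP : MeasurePreserving P volume (volume.prod volume) := b.measurePreserving_sumCoords
  have hT : T = P.symm ∘ Prod.map Tt id ∘ P := funext fun v => P.eq_symm_apply.2 <| by
    rw [hTdef, b.sumCoords_mulVec_add_sub hb, Function.comp_apply, Prod.map_apply,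
      b.sumCoords_fst hb, id]
  have hTt_bij : Function.Bijective Tt := ⟨hTtleft.injective, hTtright.surjective⟩
  refine ⟨hT ▸ P.symm.bijective.comp ((hTt_bij.prodMap Function.bijective_id).comp P.bijective),
    ?_⟩
  have hsource : (fun v => ENNReal.ofReal (stdGauss n v)) = (fun p =>
      ENNReal.ofReal (stdGauss r p.1) * ENNReal.ofReal (stdGauss (n - r) p.2)) ∘ P := by
    ext v
    rw [Function.comp_apply, ← ENNReal.ofReal_mul (stdGauss_nonneg _ _),
      ← b.stdGauss_eq_mul_sumCoords]
  have htarget : (fun m => ENNReal.ofReal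
      (g (Uᵀ.mulVec m) * ((2 * Real.pi) ^ (-((n : ℝ) - (r : ℝ)) / 2) *
        Real.exp (-(∑ i, (m i - U.mulVec (Uᵀ.mulVec m) i) ^ 2) / 2)))) = (fun p =>
      ENNReal.ofReal (g p.1) * ENNReal.ofReal (stdGauss (n - r) p.2)) ∘ P := by
    ext x
    rw [Function.comp_apply, ← ENNReal.ofReal_mul' (stdGauss_nonneg _ _), stdGauss,
      Nat.cast_sub hrn, b.sum_sq_sub_mulVec_mulVec hb, b.sumCoords_fst hb]
  rw [hT, hsource, htarget]
  exact hP.map_conj_prodMap_withDensity (f := fun w => ENNReal.ofReal (stdGauss r w))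
    (g := fun w => ENNReal.ofReal (g w)) (h := fun z => ENNReal.ofReal (stdGauss (n - r) z))
    hTt.continuous.measurable
    (measurable_stdGauss r).ennreal_ofReal.aemeasurable
    (integrable_of_integral_eq_one hgdens).aemeasurable.ennreal_ofReal
    (measurable_stdGauss (n - r)).ennreal_ofReal.aemeasurable hpushTt

/-- **Subspace-embedded transport map.** If `U ∈ ℝ^{n×r}` has orthonormal columns
and `T̃ : ℝ^r → ℝ^r` pushes the standard Gaussian on `ℝ^r` forward to density `g`,
then `T(v) = U T̃(Uᵀv) + (I − UUᵀ)v` is a bijection pushing the standard Gaussian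
on `ℝ^n` forward to `m ↦ g(Uᵀm) · (2π)^{-(n−r)/2} exp(−½‖(I − UUᵀ)m‖²)`. -/
theorem subspace_embedded_map_pushforward
    {n r : ℕ} (U : Matrix (Fin n) (Fin r) ℝ) (hU : Uᵀ * U = 1)
    (Tt Ttinv : (Fin r → ℝ) → (Fin r → ℝ))
    (hTt : ContDiff ℝ 1 Tt) (hTtinv : ContDiff ℝ 1 Ttinv)
    (hTtleft : Function.LeftInverse Ttinv Tt)
    (hTtright : Function.RightInverse Ttinv Tt)
    (g : (Fin r → ℝ) → ℝ) (hgnn : ∀ w, 0 ≤ g w) (hgdens : ∫ w, g w = 1)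
    (hpushTt : Measure.map Tt
        (volume.withDensity (fun v => ENNReal.ofReal (stdGauss r v)))
      = volume.withDensity (fun w => ENNReal.ofReal (g w)))
    (T : (Fin n → ℝ) → (Fin n → ℝ))
    (hTdef : ∀ v, T v = U.mulVec (Tt (Uᵀ.mulVec v)) + (v - U.mulVec (Uᵀ.mulVec v))) :
    Function.Bijective T ∧
    Measure.map T (volume.withDensity (fun v => ENNReal.ofReal (stdGauss n v)))
      = volume.withDensity (fun m => ENNReal.ofReal
          (g (Uᵀ.mulVec m) * ((2 * Real.pi) ^ (-((n : ℝ) - (r : ℝ)) / 2) *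
            Real.exp (-(∑ i, (m i - U.mulVec (Uᵀ.mulVec m) i) ^ 2) / 2)))) :=
  subspace_embedded_map_pushforward_general U hU Tt Ttinv hTt hTtleft hTtright g hgdens hpushTt T
    hTdef
end
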